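/- For a set A of atoms with at least two elements, the initial algebra of CP + ⟨T ◁ x ▷ T = T⟩ is not a Hoare–McCarthy algebra; in particular, for distinct atoms a, b, the equations T ◁ a ▷ T = T and T ◁ b ▷ T = T hold in this algebra but T ◁ a ▷ b = T ◁ b ▷ a does not. -/

import Mathlib

/-!
Read a conditional expression as a binary decision tree: `x ◁ y ▷ z` grafts the trees of `x`
and `z` onto the true and false leaves of the tree of `y`. Collapsing every node whose two
subtrees coincide turns this into an invariant of derivability in CP + ⟨T ◁ x ▷ T = T⟩, and it
sends `T ◁ a ▷ b` and `T ◁ b ▷ a` to reduced trees with the different roots `a` and `b`.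
-/

inductive CE (A : Type) : Type
  | tt : CE A
  | ff : CE A
  | atom : A → CE A
  | cond : CE A → CE A → CE A → CE A
inductive Deriv {A : Type} (Ax : CE A → CE A → Prop) : CE A → CE A → Prop
  | ax {t t'} : Ax t t' → Deriv Ax t t'
  | refl (t) : Deriv Ax t t
  | symm {t t'} : Deriv Ax t t' → Deriv Ax t' t
  | trans {t t' t''} : Deriv Ax t t' → Deriv Ax t' t'' → Deriv Ax t t''
  | congr {x x' y y' z z'} : Deriv Ax x x' → Deriv Ax y y' → Deriv Ax z z' →
      Deriv Ax (.cond x y z) (.cond x' y' z')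
  | cp1 (x y) : Deriv Ax (.cond x .tt y) x
  | cp2 (x y) : Deriv Ax (.cond x .ff y) y
  | cp3 (x) : Deriv Ax (.cond .tt x .ff) x
  | cp4 (x y z u v) : Deriv Ax (.cond x (.cond y z u) v) (.cond (.cond x y v) z (.cond x u v))

/-- Derivability from the CP axioms alone (no extra axioms). -/
def CP {A : Type} : CE A → CE A → Prop := Deriv (fun _ _ => False)

/-- The extra axiom scheme T ◁ x ▷ T = T. -/
def AxOh {A : Type} : CE A → CE A → Prop :=
  fun s t => ∃ x : CE A, s = .cond .tt x .tt ∧ t = .tt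

inductive DecTree (A : Type) : Type
  | leaf : Bool → DecTree A
  | node : A → DecTree A → DecTree A → DecTree A

namespace DecTree

variable {A : Type}

def graft : DecTree A → DecTree A → DecTree A → DecTree A
  | .leaf true, u, _ => u
  | .leaf false, _, v => v
  | .node a l r, u, v => .node a (graft l u v) (graft r u v)

open Classical in
noncomputable def prune : DecTree A → DecTree A
  | .leaf b => .leaf b
  | .node a l r => if prune l = prune r then prune l else .node a (prune l) (prune r)

theorem graft_leaf_true_leaf_false (t : DecTree A) : graft t (.leaf true) (.leaf false) = t := by
  induction t with
  | leaf b => cases b <;> rfl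
  | node a l r ihl ihr => rw [graft, ihl, ihr]

theorem graft_graft (t p q u v : DecTree A) :
    graft (graft t p q) u v = graft t (graft p u v) (graft q u v) := by
  induction t with
  | leaf b => cases b <;> rfl
  | node a l r ihl ihr => simp only [graft, ihl, ihr]

theorem prune_prune (t : DecTree A) : prune (prune t) = prune t := by
  induction t with
  | leaf b => rfl
  | node a l r ihl ihr =>
    by_cases h : prune l = prune r
    · rw [prune, if_pos h, ihl]
    · rw [prune, if_neg h, prune, ihl, ihr, if_neg h]

theorem prune_graft_self (t u : DecTree A) : prune (graft t u u) = prune u := by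
  induction t with
  | leaf b => cases b <;> rfl
  | node a l r ihl ihr => rw [graft, prune, ihl, ihr, if_pos rfl]

theorem prune_graft_prune_left (t u v : DecTree A) :
    prune (graft (prune t) u v) = prune (graft t u v) := by
  induction t with
  | leaf b => rfl
  | node a l r ihl ihr =>
    by_cases h : prune l = prune r
    · have hlr : prune (graft r u v) = prune (graft l u v) := by rw [← ihr, ← h, ihl]
      rw [prune, if_pos h, ihl, graft, prune, hlr, if_pos rfl]
    · rw [prune, if_neg h, graft, graft, prune, prune, ihl, ihr]

theorem prune_graft_prune_right (t u v : DecTree A) :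
    prune (graft t (prune u) (prune v)) = prune (graft t u v) := by
  induction t with
  | leaf b => cases b <;> exact prune_prune _
  | node a l r ihl ihr => rw [graft, graft, prune, prune, ihl, ihr]

theorem prune_graft_prune (t u v : DecTree A) :
    prune (graft (prune t) (prune u) (prune v)) = prune (graft t u v) := by
  rw [prune_graft_prune_left, prune_graft_prune_right]

end DecTree

namespace CE

open DecTree

variable {A : Type}

def toTree : CE A → DecTree A
  | tt => .leaf true
  | ff => .leaf false
  | atom a => .node a (.leaf true) (.leaf false)
  | cond x y z => graft (toTree y) (toTree x) (toTree z)

noncomputable def reducedTree (t : CE A) : DecTree A := prune t.toTree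

theorem reducedTree_cond (x y z : CE A) :
    (cond x y z).reducedTree = prune (graft y.reducedTree x.reducedTree z.reducedTree) :=
  (prune_graft_prune _ _ _).symm

theorem reducedTree_eq_of_axOh {s t : CE A} (h : AxOh s t) : s.reducedTree = t.reducedTree := by
  obtain ⟨x, rfl, rfl⟩ := h
  exact prune_graft_self _ _

theorem reducedTree_cond_tt_atom_atom (a b : A) :
    (cond tt (atom a) (atom b)).reducedTree =
      .node a (.leaf true) (.node b (.leaf true) (.leaf false)) := by
  simp [reducedTree, toTree, graft, prune]

end CE

theorem Deriv.reducedTree_eq {A : Type} {Ax : CE A → CE A → Prop}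
    (hAx : ∀ {s t}, Ax s t → s.reducedTree = t.reducedTree) {s t : CE A} (h : Deriv Ax s t) :
    s.reducedTree = t.reducedTree := by
  induction h with
  | ax h => exact hAx h
  | refl => rfl
  | symm _ ih => exact ih.symm
  | trans _ _ ih₁ ih₂ => exact ih₁.trans ih₂
  | congr _ _ _ ihx ihy ihz => rw [CE.reducedTree_cond, CE.reducedTree_cond, ihx, ihy, ihz]
  | cp1 | cp2 => rfl
  | cp3 => exact congrArg DecTree.prune (DecTree.graft_leaf_true_leaf_false _)
  | cp4 => exact congrArg DecTree.prune (DecTree.graft_graft _ _ _ _ _)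

theorem initial_algebra_not_hma (A : Type) (a b : A) (hab : a ≠ b) :
    Deriv AxOh (.cond .tt (.atom a) .tt) (CE.tt : CE A) ∧
    Deriv AxOh (.cond .tt (.atom b) .tt) (CE.tt : CE A) ∧
    ¬ Deriv AxOh (.cond .tt (.atom a) (.atom b)) (.cond (CE.tt : CE A) (.atom b) (.atom a)) := by
  refine ⟨.ax ⟨_, rfl, rfl⟩, .ax ⟨_, rfl, rfl⟩, fun h => hab ?_⟩
  have hTree := h.reducedTree_eq CE.reducedTree_eq_of_axOh
  rw [CE.reducedTree_cond_tt_atom_atom, CE.reducedTree_cond_tt_atom_atom] at hTree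
  injection hTree
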